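/- For every positive integer n, the alternating group A_n has a basis. -/

import Mathlib

/-- A sequence `b : Fin n → G` of non-identity elements is a *basis* for the group `G`
if every `g ∈ G` is uniquely of the form `b 0 ^ a 0 * ⋯ * b (n-1) ^ a (n-1)`
with `a i ∈ {0, …, orderOf (b i) - 1}`. -/
def IsGroupBasis {G : Type*} [Group G] {n : ℕ} (b : Fin n → G) : Prop :=
  (∀ i, b i ≠ 1) ∧
    Function.Bijective (fun a : ∀ i, Fin (orderOf (b i)) =>
      (List.ofFn fun i => b i ^ ((a i : ℕ))).prod)

/-- `G` has a basis. -/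
def HasGroupBasis (G : Type*) [Group G] : Prop :=
  ∃ (n : ℕ) (b : Fin n → G), IsGroupBasis b

/-!
Let `A_k ≤ A_n` be the even permutations fixing every point `≥ k`, so `A_2 = 1` and `A_n` is
everything. Since `A_k` is the stabiliser of `k` in `A_{k+1}`, a set `T ⊆ A_{k+1}` with
`T · k = {0, …, k}` satisfies `A_{k+1} = T · A_k`. For even `k` take `T = ⟨c⟩` with `c` the
`(k+1)`-cycle `(0 1 ⋯ k)`, which is even. For odd `k = 2m - 1` that cycle is odd; instead take
`T = ⟨c²⟩ · {1, s}`, where `c²` has the odd and the even points of `{0, …, k}` as its two orbits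
(each of size `m`) and `s = (0 k)(1 2)` moves `k` into the even orbit. Prepending these elements
to a sequence whose products cover `A_k` gives one whose products cover `A_{k+1}`, and the
product of the orders grows by the factor `k + 1 = [A_{k+1} : A_k]`. At `k = n` the product map
is thus a surjection between sets of size `n!/2`, hence a bijection.
-/

open Equiv Equiv.Perm MulAction Pointwise

section GroupBasis

variable {G : Type*} [Group G]

def powProd {m : ℕ} (b : Fin m → G) (a : ∀ i, Fin (orderOf (b i))) : G :=
  (List.ofFn fun i => b i ^ (a i : ℕ)).prod

theorem powProd_cons {m : ℕ} (c : G) (b : Fin m → G) (j : Fin (orderOf c))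
    (a : ∀ i, Fin (orderOf (b i))) :
    powProd (Fin.cons c b : Fin (m + 1) → G) (Fin.cons j a) = c ^ (j : ℕ) * powProd b a := by
  rw [powProd, List.ofFn_succ, List.prod_cons]
  rfl

theorem powers_mul_subset_range_powProd_cons {m : ℕ} {c : G} (hc : IsOfFinOrder c)
    {b : Fin m → G} {S : Set G} (hS : S ⊆ Set.range (powProd b)) :
    (Submonoid.powers c : Set G) * S ⊆ Set.range (powProd (Fin.cons c b : Fin (m + 1) → G)) := by
  rintro _ ⟨_, ⟨j, rfl⟩, x, hx, rfl⟩
  obtain ⟨a, rfl⟩ := hS hx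
  refine ⟨Fin.cons (⟨j % orderOf c, Nat.mod_lt _ hc.orderOf_pos⟩ : Fin (orderOf c)) a, ?_⟩
  rw [powProd_cons, pow_mod_orderOf]

theorem isGroupBasis_of_surjective [Finite G] {m : ℕ} {b : Fin m → G} (hb : ∀ i, b i ≠ 1)
    (hsurj : Function.Surjective (powProd b)) (hcard : ∏ i, orderOf (b i) = Nat.card G) :
    IsGroupBasis b := by
  refine ⟨hb, (Nat.bijective_iff_surjective_and_card _).2 ⟨hsurj, ?_⟩⟩
  simp [hcard]

theorem hasGroupBasis_of_subsingleton [Subsingleton G] : HasGroupBasis G :=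
  ⟨0, Fin.elim0, isGroupBasis_of_surjective (fun i => i.elim0)
    (fun _ => ⟨fun i => i.elim0, Subsingleton.elim _ _⟩) (by simp)⟩

end GroupBasis

section FixingSubgroup

variable {G α : Type*} [Group G] [MulAction G α] {s : Set α} {x : α}

theorem smul_notMem_of_mem_fixingSubgroup {σ : G} (hσ : σ ∈ fixingSubgroup G s) (hx : x ∉ s) :
    σ • x ∉ s := fun h => by
  have hfix := (mem_fixingSubgroup_iff G).1 (inv_mem hσ) _ h
  rw [inv_smul_smul] at hfix
  exact hx (hfix ▸ h)

theorem fixingSubgroup_subset_mul_fixingSubgroup_insert {T : Set G} (hx : x ∉ s)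
    (hT : T ⊆ fixingSubgroup G s) (htrans : ∀ y ∉ s, ∃ t ∈ T, t • x = y) :
    (fixingSubgroup G s : Set G) ⊆ T * fixingSubgroup G (insert x s) := by
  intro σ hσ
  obtain ⟨t, htT, htx⟩ := htrans _ (smul_notMem_of_mem_fixingSubgroup hσ hx)
  refine ⟨t, htT, t⁻¹ * σ, ?_, mul_inv_cancel_left t σ⟩
  rw [SetLike.mem_coe, SubMulAction.mem_fixingSubgroup_insert_iff]
  exact ⟨by rw [mul_smul, ← htx, inv_smul_smul], mul_mem (inv_mem (hT htT)) hσ⟩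

end FixingSubgroup

theorem alternatingGroup.eq_one_of_support_subset {α : Type*} [Fintype α] [DecidableEq α]
    {s : Finset α} (hs : s.card ≤ 2) {σ : alternatingGroup α} (hσ : (σ : Perm α).support ⊆ s) :
    σ = 1 := by
  obtain ⟨τ, rfl⟩ := (alternatingGroup.mem_range_ofSubtype_iff s σ).2 hσ
  have hbot : alternatingGroup s = ⊥ := alternatingGroup.eq_bot_of_card_le_two (by simpa using hs)
  rw [show τ = 1 from Subtype.ext ((Subgroup.eq_bot_iff_forall _).1 hbot τ τ.2), map_one]

namespace Fin

variable {n : ℕ}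

theorem coe_cycleRange_pow_apply {i j : Fin n} {t : ℕ} (h : (j : ℕ) + t ≤ i) :
    ((cycleRange i ^ t) j : ℕ) = j + t := by
  induction t with
  | zero => rfl
  | succ t ih =>
    rw [pow_succ', Perm.mul_apply, coe_cycleRange_of_lt (Fin.lt_def.2 (by omega)), ih (by omega)]
    rfl

theorem coe_cycleRange_pow_succ_apply_self {i : Fin n} {t : ℕ} (h : t ≤ i) :
    ((cycleRange i ^ (t + 1)) i : ℕ) = t := by
  have hi : (cycleRange i i : ℕ) = 0 := by rw [coe_cycleRange_of_le le_rfl, if_pos rfl]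
  rw [pow_succ, Perm.mul_apply, coe_cycleRange_pow_apply (by omega), hi, zero_add]

theorem orderOf_cycleRange [NeZero n] {i : Fin n} (h : i ≠ 0) :
    orderOf (cycleRange i) = i + 1 := by
  rw [← lcm_cycleType, cycleType_cycleRange h, Multiset.lcm_singleton, normalize_eq]

end Fin

section Alternating

variable {n : ℕ}

/-- The copy of `A_k` inside `A_n`. -/
abbrev fixingFrom (n k : ℕ) : Subgroup (alternatingGroup (Fin n)) :=
  fixingSubgroup (alternatingGroup (Fin n)) {j : Fin n | k ≤ (j : ℕ)}

theorem mem_fixingFrom {k : ℕ} {σ : alternatingGroup (Fin n)} :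
    σ ∈ fixingFrom n k ↔ ∀ j : Fin n, k ≤ (j : ℕ) → (σ : Perm (Fin n)) j = j :=
  mem_fixingSubgroup_iff _

theorem fixingFrom_two_eq_bot (hn : 2 ≤ n) : fixingFrom n 2 = ⊥ := by
  refine (Subgroup.eq_bot_iff_forall _).2 fun σ hσ => ?_
  refine alternatingGroup.eq_one_of_support_subset (s := {⟨0, by omega⟩, ⟨1, by omega⟩})
    Finset.card_le_two fun j hj => ?_
  have hj2 : (j : ℕ) < 2 := by
    by_contra h
    exact Perm.mem_support.1 hj (mem_fixingFrom.1 hσ j (by omega))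
  simp only [Finset.mem_insert, Finset.mem_singleton, Fin.ext_iff]
  omega

theorem fixingFrom_self_eq_top : fixingFrom n n = ⊤ :=
  (Subgroup.eq_top_iff' _).2 fun _ => mem_fixingFrom.2 fun j hj => absurd j.isLt (by omega)

theorem fixingFrom_succ_subset (i : Fin n) {T : Set (alternatingGroup (Fin n))}
    (hT : T ⊆ fixingFrom n (i + 1))
    (htrans : ∀ v : Fin n, v ≤ i → ∃ t ∈ T, (t : Perm (Fin n)) i = v) :
    (fixingFrom n (i + 1) : Set (alternatingGroup (Fin n))) ⊆ T * (fixingFrom n i : Set _) := by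
  have hins : insert i {j : Fin n | (i : ℕ) + 1 ≤ j} = {j : Fin n | i ≤ (j : ℕ)} := by
    ext j
    simp only [Set.mem_insert_iff, Set.mem_ofPred_eq, Fin.ext_iff]
    omega
  unfold fixingFrom
  rw [← hins]
  exact fixingSubgroup_subset_mul_fixingSubgroup_insert (by simp) hT
    fun v hv => htrans v (by simp at hv; exact Fin.le_def.2 (by omega))

theorem exists_fixingFrom_succ_subset_powers_mul (i : Fin n) (hi : Even (i : ℕ))
    (hi0 : (i : ℕ) ≠ 0) :
    ∃ c : alternatingGroup (Fin n), orderOf c = i + 1 ∧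
      (fixingFrom n (i + 1) : Set (alternatingGroup (Fin n))) ⊆
        (Submonoid.powers c : Set _) * (fixingFrom n i : Set _) := by
  have : NeZero n := ⟨by have := i.isLt; omega⟩
  let c : alternatingGroup (Fin n) :=
    ⟨Fin.cycleRange i, by rw [mem_alternatingGroup, Fin.sign_cycleRange, hi.neg_one_pow]⟩
  have hc : c ∈ fixingFrom n (i + 1) :=
    mem_fixingFrom.2 fun j hj => Fin.cycleRange_of_gt (Fin.lt_def.2 hj)
  have hord : orderOf c = i + 1 := by
    rw [Subgroup.orderOf_mk, Fin.orderOf_cycleRange (Fin.ne_of_val_ne (by simpa using hi0))]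
  refine ⟨c, hord, fixingFrom_succ_subset i ?_ fun v hv => ?_⟩
  · rintro _ ⟨j, rfl⟩
    exact pow_mem hc j
  · exact ⟨c ^ ((v : ℕ) + 1), ⟨_, rfl⟩, Fin.ext (Fin.coe_cycleRange_pow_succ_apply_self hv)⟩

theorem exists_orderOf_eq_two_mem_fixingFrom_succ (i : Fin n) (hi3 : 3 ≤ (i : ℕ)) :
    ∃ s : alternatingGroup (Fin n), orderOf s = 2 ∧ s ∈ fixingFrom n (i + 1) ∧
      ((s : Perm (Fin n)) i : ℕ) = 0 := by
  have hin := i.isLt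
  obtain ⟨p₀, hp₀⟩ : ∃ p : Fin n, (p : ℕ) = 0 := ⟨⟨0, by omega⟩, rfl⟩
  obtain ⟨p₁, hp₁⟩ : ∃ p : Fin n, (p : ℕ) = 1 := ⟨⟨1, by omega⟩, rfl⟩
  obtain ⟨p₂, hp₂⟩ : ∃ p : Fin n, (p : ℕ) = 2 := ⟨⟨2, by omega⟩, rfl⟩
  have hnodup : [p₀, i, p₁, p₂].Nodup := by
    simp [Fin.ext_iff, hp₀, hp₁, hp₂]
    omega
  obtain ⟨s, hs⟩ : ∃ s : alternatingGroup (Fin n), (s : Perm (Fin n)) = swap p₀ i * swap p₁ p₂ :=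
    ⟨⟨_, mul_mem_alternatingGroup_of_isSwap (swap_isSwap_iff.2 (by simp [Fin.ext_iff, hp₀]; omega))
      (swap_isSwap_iff.2 (by simp [Fin.ext_iff, hp₁, hp₂]))⟩, rfl⟩
  refine ⟨s, ?_, mem_fixingFrom.2 fun j hj => ?_, ?_⟩
  · rw [← Subgroup.orderOf_coe, hs, ← lcm_cycleType, cycleType_swap_mul_swap_of_nodup hnodup]
    simp
  · rw [hs, Perm.mul_apply, swap_apply_of_ne_of_ne (x := j), swap_apply_of_ne_of_ne (x := j)] <;>
      exact Fin.ne_of_val_ne (by omega)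
  · rw [hs, Perm.mul_apply, swap_apply_of_ne_of_ne (x := i), swap_apply_right, hp₀] <;>
      exact Fin.ne_of_val_ne (by omega)

theorem exists_fixingFrom_succ_subset_powers_mul_powers_mul (i : Fin n) (hi : Odd (i : ℕ))
    (hi3 : 3 ≤ (i : ℕ)) :
    ∃ s c : alternatingGroup (Fin n), orderOf s = 2 ∧ 2 * orderOf c = i + 1 ∧
      (fixingFrom n (i + 1) : Set (alternatingGroup (Fin n))) ⊆
        (Submonoid.powers c : Set _) *
          ((Submonoid.powers s : Set _) * (fixingFrom n i : Set _)) := by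
  have : NeZero n := ⟨by have := i.isLt; omega⟩
  obtain ⟨s, hs, hsfix, hsi⟩ := exists_orderOf_eq_two_mem_fixingFrom_succ i hi3
  obtain ⟨c, hc⟩ : ∃ c : alternatingGroup (Fin n), (c : Perm (Fin n)) = Fin.cycleRange i ^ 2 :=
    ⟨⟨_, by rw [mem_alternatingGroup, map_pow, Int.units_sq]⟩, rfl⟩
  have hcfix : c ∈ fixingFrom n (i + 1) := mem_fixingFrom.2 fun j hj => by
    have hij : i < j := Fin.lt_def.2 hj
    rw [hc, sq, Perm.mul_apply, Fin.cycleRange_of_gt hij, Fin.cycleRange_of_gt hij]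
  have hd : orderOf (Fin.cycleRange i) = i + 1 :=
    Fin.orderOf_cycleRange (Fin.ne_of_val_ne (by rw [Fin.val_zero]; omega))
  refine ⟨s, c, hs, ?_, ?_⟩
  · rw [← Subgroup.orderOf_coe, hc, orderOf_pow_of_dvd two_ne_zero (hd ▸ hi.add_one.two_dvd), hd,
      Nat.mul_div_cancel' hi.add_one.two_dvd]
  rw [← mul_assoc]
  refine fixingFrom_succ_subset i ?_ fun v hv => ?_
  · rintro _ ⟨_, ⟨a, rfl⟩, _, ⟨b, rfl⟩, rfl⟩
    exact mul_mem (pow_mem hcfix a) (pow_mem hsfix b)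
  rcases Nat.even_or_odd' v with ⟨j, hj | hj⟩
  · refine ⟨c ^ j * s ^ 1, Set.mul_mem_mul ⟨j, rfl⟩ ⟨1, rfl⟩, Fin.ext ?_⟩
    rw [pow_one, Subgroup.coe_mul, SubgroupClass.coe_pow, Perm.mul_apply, hc, ← pow_mul,
      Fin.coe_cycleRange_pow_apply (by omega), hsi, hj, zero_add]
  · refine ⟨c ^ (j + 1) * s ^ 0, Set.mul_mem_mul ⟨j + 1, rfl⟩ ⟨0, rfl⟩, Fin.ext ?_⟩
    rw [pow_zero, mul_one, SubgroupClass.coe_pow, hc, ← pow_mul,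
      show 2 * (j + 1) = 2 * j + 1 + 1 by ring, Fin.coe_cycleRange_pow_succ_apply_self (by omega),
      hj]

open Nat in
theorem exists_powProd_fixingFrom {k : ℕ} (hk : 2 ≤ k) (hkn : k ≤ n) :
    ∃ (m : ℕ) (b : Fin m → alternatingGroup (Fin n)), (∀ i, b i ≠ 1) ∧
      (∏ i, orderOf (b i)) * 2 = k ! ∧
      (fixingFrom n k : Set (alternatingGroup (Fin n))) ⊆ Set.range (powProd b) := by
  induction k, hk using Nat.le_induction with
  | base =>
    refine ⟨0, Fin.elim0, fun i => i.elim0, rfl, ?_⟩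
    rw [fixingFrom_two_eq_bot hkn]
    rintro _ rfl
    exact ⟨fun i => i.elim0, rfl⟩
  | succ k hk ih =>
    obtain ⟨m, b, hb, hcard, hsub⟩ := ih (by omega)
    rcases Nat.even_or_odd k with heven | hodd
    · obtain ⟨c, hc, hsub'⟩ :=
        exists_fixingFrom_succ_subset_powers_mul (n := n) ⟨k, hkn⟩ heven (show k ≠ 0 by omega)
      have hc1 : c ≠ 1 := fun h => by simp [h] at hc; omega
      refine ⟨m + 1, Fin.cons c b, Fin.forall_fin_succ.2 ⟨hc1, hb⟩, ?_,
        hsub'.trans (powers_mul_subset_range_powProd_cons (isOfFinOrder_of_finite c) hsub)⟩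
      simp only [Fin.prod_univ_succ, Fin.cons_zero, Fin.cons_succ, hc]
      rw [factorial_succ, ← hcard]
      ring
    · obtain ⟨s, c, hs, hc, hsub'⟩ :=
        exists_fixingFrom_succ_subset_powers_mul_powers_mul (n := n) ⟨k, hkn⟩ hodd
          (show 3 ≤ k by obtain ⟨j, rfl⟩ := hodd; omega)
      have hs1 : s ≠ 1 := fun h => by simp [h] at hs
      have hc1 : c ≠ 1 := fun h => by simp [h] at hc; omega
      refine ⟨m + 2, Fin.cons c (Fin.cons s b),
        Fin.forall_fin_succ.2 ⟨hc1, Fin.forall_fin_succ.2 ⟨hs1, hb⟩⟩, ?_,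
        hsub'.trans (powers_mul_subset_range_powProd_cons (isOfFinOrder_of_finite c)
          (powers_mul_subset_range_powProd_cons (isOfFinOrder_of_finite s) hsub))⟩
      simp only [Fin.prod_univ_succ, Fin.cons_zero, Fin.cons_succ, hs]
      rw [factorial_succ, ← hcard, show k + 1 = 2 * orderOf c from hc.symm]
      ring

end Alternating

theorem alternatingGroup_hasGroupBasis_general (n : ℕ) :
    HasGroupBasis (alternatingGroup (Fin n)) := by
  rcases lt_or_ge n 2 with hn | hn
  · have : Subsingleton (Fin n) := Fin.subsingleton_iff_le_one.2 (by omega)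
    exact hasGroupBasis_of_subsingleton
  obtain ⟨m, b, hb, hcard, hsub⟩ := exists_powProd_fixingFrom hn le_rfl
  refine ⟨m, b, isGroupBasis_of_surjective hb (fun σ => hsub ?_) ?_⟩
  · rw [fixingFrom_self_eq_top]
    trivial
  · have : Nontrivial (Fin n) := Fin.nontrivial_iff_two_le.2 hn
    rw [← Nat.mul_left_inj two_ne_zero, hcard, mul_comm, two_mul_nat_card_alternatingGroup,
      Nat.card_perm, Nat.card_fin]

/-- For every positive integer `n`, the alternating group `Aₙ` has a basis. -/
theorem alternatingGroup_hasGroupBasis (n : ℕ) (hn : 0 < n) :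
    HasGroupBasis (alternatingGroup (Fin n)) :=
  alternatingGroup_hasGroupBasis_general n
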